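/- arXiv:1105.1127 — 2 statements merged into one kernel-verified Lean document; each statement's English description precedes it below -/
import Mathlib

section
/- Let Φ = (1+√5)/2 and ψ(x) = log_Φ(√5·(log_Φ(√5·x) + x) − 5 + 3/x) − 2. Then for every natural number n ≥ 2, ψ(F_{n+2} − n) < n. -/
/-!
Write `x = F_{n+2} - n` and `φ' = (1 - √5)/2`. Binet's formula gives
`√5 x = φ^(n+2) - φ'^(n+2) - √5 n < φ^(n+2)`, so the inner logarithm is below `n + 2` and the
argument of the outer one is below `φ^(n+2) + (2√5 - 5 - φ'^(n+2) + 3/x)`. For `n ≥ 5` the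
bracket is negative, since `|φ'^(n+2)| ≤ φ'^4 ≈ 0.146`, `3/x ≤ 3/8` and `5 - 2√5 ≈ 0.528`; for
`n = 2, 3, 4` the inner logarithm is bounded by a smaller integer instead.
-/

open Real

section

open goldenRatio

theorem logb_lt_of_lt_pow {b x : ℝ} {m : ℕ} (hb : 1 < b) (hx : 0 < x) (h : x < b ^ m) :
    logb b x < m := by
  rwa [logb_lt_iff_lt_rpow hb hx, rpow_natCast]

theorem sqrt_five_gt : 2.2 < √5 := by
  rw [lt_sqrt (by norm_num)]; norm_num

theorem sqrt_five_lt : √5 < 2.25 := by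
  rw [sqrt_lt' (by norm_num)]; norm_num

theorem sqrt_five_mul_add_div_gt_five {x : ℝ} (hx : 0 < x) : 5 < √5 * x + 3 / x := by
  have h5 : √5 ^ 2 = 5 := sq_sqrt (by norm_num)
  have hquad : 0 < √5 * x ^ 2 - 5 * x + 3 := by
    nlinarith [sq_nonneg (2 * √5 * x - 5), sqrt_five_gt]
  rw [show √5 * x + 3 / x = (√5 * x ^ 2 + 3) / x by field_simp, lt_div_iff₀ hx]
  linarith

theorem logb_goldenRatio_lt_of_bounds {x : ℝ} {k m : ℕ} (hx : 1 ≤ x) (hk : √5 * x < φ ^ k)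
    (hm : √5 * (k + x) - 5 + 3 / x ≤ φ ^ m) :
    logb φ (√5 * (logb φ (√5 * x) + x) - 5 + 3 / x) < m := by
  have hx0 : 0 < x := by linarith
  have hsx : 0 < √5 * x := by positivity
  have hL0 : 0 ≤ logb φ (√5 * x) :=
    logb_nonneg one_lt_goldenRatio (by nlinarith [sqrt_five_gt])
  have hLk : logb φ (√5 * x) < k := logb_lt_of_lt_pow one_lt_goldenRatio hsx hk
  have := sqrt_five_mul_add_div_gt_five hx0
  apply logb_lt_of_lt_pow one_lt_goldenRatio
  · nlinarith [sqrt_nonneg 5]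
  · nlinarith [sqrt_nonneg 5, sqrt_five_gt]

theorem sqrt_five_mul_fib_add_two_sub (n : ℕ) :
    √5 * ((Nat.fib (n + 2) : ℝ) - n) = φ ^ (n + 2) - ψ ^ (n + 2) - √5 * n := by
  rw [coe_fib_eq, mul_sub, mul_div_cancel₀ _ (by positivity)]

theorem neg_goldenConj_pow_le {k : ℕ} (hk : 4 ≤ k) : -ψ ^ k ≤ ψ ^ 4 := by
  have habs : |ψ| ≤ 1 := abs_le.2 ⟨neg_one_lt_goldenConj.le, goldenConj_neg.le.trans zero_le_one⟩
  calc -ψ ^ k ≤ |ψ| ^ k := by rw [← abs_pow]; exact neg_le_abs _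
    _ ≤ |ψ| ^ 4 := pow_le_pow_of_le_one (abs_nonneg _) habs hk
    _ = ψ ^ 4 := Even.pow_abs (by decide) ψ

theorem goldenConj_pow_four : ψ ^ 4 = (7 - 3 * √5) / 2 := by
  rw [← goldenConj_mul_fib_succ_add_fib]; norm_num; ring

theorem add_eight_le_fib_add_two {n : ℕ} (hn : 5 ≤ n) : n + 8 ≤ Nat.fib (n + 2) := by
  induction n, hn using Nat.le_induction with
  | base => decide
  | succ k hk ih =>
    have : Nat.fib (k + 2) < Nat.fib (k + 1 + 2) := Nat.fib_add_two_strictMono k.lt_succ_self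
    omega

theorem logb_goldenRatio_lt_of_five_le {n : ℕ} {x : ℝ} (hn : 5 ≤ n)
    (hx : (Nat.fib (n + 2) : ℝ) - n = x) :
    logb φ (√5 * (logb φ (√5 * x) + x) - 5 + 3 / x) < (n + 2 : ℕ) := by
  have hbinet : √5 * x = φ ^ (n + 2) - ψ ^ (n + 2) - √5 * n := hx ▸ sqrt_five_mul_fib_add_two_sub n
  have hconj : -ψ ^ (n + 2) ≤ (7 - 3 * √5) / 2 :=
    goldenConj_pow_four ▸ neg_goldenConj_pow_le (by omega)
  have hx8 : 8 ≤ x := by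
    have : ((n + 8 : ℕ) : ℝ) ≤ Nat.fib (n + 2) := by exact_mod_cast add_eight_le_fib_add_two hn
    push_cast at this
    linarith
  have h3x : 3 / x ≤ 3 / 8 := div_le_div_of_nonneg_left (by norm_num) (by norm_num) hx8
  have hsn : √5 * 5 ≤ √5 * n := by gcongr; exact_mod_cast hn
  refine logb_goldenRatio_lt_of_bounds (k := n + 2) (by linarith) ?_ ?_
  · linarith [sqrt_five_gt]
  · push_cast
    linarith [sqrt_five_lt]

end

theorem stmt12 (n : ℕ) (hn : 2 ≤ n) :
    let Φ : ℝ := (1 + Real.sqrt 5) / 2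
    let ψ : ℝ → ℝ := fun x => Real.logb Φ (Real.sqrt 5 * (Real.logb Φ (Real.sqrt 5 * x) + x) - 5 + 3 / x) - 2
    ψ ((Nat.fib (n + 2) : ℝ) - n) < n := by
  intro Φ ψ
  generalize hx : (Nat.fib (n + 2) : ℝ) - n = x
  suffices h : logb goldenRatio (√5 * (logb goldenRatio (√5 * x) + x) - 5 + 3 / x) < (n + 2 : ℕ) by
    push_cast at h
    show _ - 2 < _
    linarith
  obtain rfl | rfl | rfl | hn5 : n = 2 ∨ n = 3 ∨ n = 4 ∨ 5 ≤ n := by omega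
  · subst hx
    refine logb_goldenRatio_lt_of_bounds (k := 2) ?_ ?_ ?_ <;>
      norm_num [← goldenRatio_mul_fib_succ_add_fib, goldenRatio] <;> linarith [sqrt_five_lt]
  · subst hx
    refine logb_goldenRatio_lt_of_bounds (k := 4) ?_ ?_ ?_ <;>
      norm_num [← goldenRatio_mul_fib_succ_add_fib, goldenRatio] <;> linarith [sqrt_five_lt]
  · subst hx
    refine logb_goldenRatio_lt_of_bounds (k := 5) ?_ ?_ ?_ <;>
      norm_num [← goldenRatio_mul_fib_succ_add_fib, goldenRatio] <;> linarith [sqrt_five_lt]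
  · exact logb_goldenRatio_lt_of_five_le hn5 hx
end

section
/- For every natural number n > 10, √5·(log_Φ(√5·(F_{n+2} − n)) + F_{n+2} − n) − 5 + 3/(F_{n+2} − n) < Φ^{n+2}, where Φ = (1+√5)/2. -/
/-!
Binet's formula gives `√5 F_k = φ^k - ψ^k` with `|ψ^k| ≤ ψ^2 < 1` for `k ≥ 2`. Hence
`√5 (F_{n+2} - n) < φ^(n+2)`, so the logarithm is below `n + 2`, and the left-hand side is below
`φ^(n+2) - ψ^(n+2) + 2√5 - 5 + 3 / (F_{n+2} - n)`. As `F_{n+2} - n` increases with `n`, it is at least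
`F_13 - 11 = 222`, and `2√5 - 5 + ψ^2 + 3/222 < 0` because `ψ^2 = (3 - √5)/2`.
-/

open Real goldenRatio

theorem Nat.fib_add_two_add_le {k n : ℕ} (hkn : k ≤ n) :
    Nat.fib (k + 2) + n ≤ Nat.fib (n + 2) + k := by
  induction n, hkn using Nat.le_induction with
  | base => rfl
  | succ n _ ih =>
    have : 1 ≤ Nat.fib (n + 1) := Nat.fib_pos.mpr n.succ_pos
    have : Nat.fib (n + 3) = Nat.fib (n + 1) + Nat.fib (n + 2) := Nat.fib_add_two
    show Nat.fib (k + 2) + (n + 1) ≤ Nat.fib (n + 3) + k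
    omega

namespace Real

theorem sqrt_five_mul_fib (k : ℕ) : √5 * Nat.fib k = φ ^ k - ψ ^ k := by
  rw [coe_fib_eq]
  field_simp

theorem abs_goldenConj_pow_le_goldenConj_sq {k : ℕ} (hk : 2 ≤ k) : |ψ ^ k| ≤ ψ ^ 2 := by
  rw [abs_pow, ← sq_abs ψ]
  refine pow_le_pow_of_le_one (abs_nonneg ψ) (abs_le.mpr ⟨neg_one_lt_goldenConj.le, ?_⟩) hk
  linarith [goldenConj_neg]

theorem sqrt_five_mul_fib_sub_lt_goldenRatio_pow {n : ℕ} (hn : 1 ≤ n) :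
    √5 * ((Nat.fib (n + 2) : ℝ) - n) < φ ^ (n + 2) := by
  have hψ := neg_le_of_abs_le (abs_goldenConj_pow_le_goldenConj_sq (k := n + 2) le_add_self)
  have hsqrt : 1 < √5 := by rw [lt_sqrt zero_le_one]; norm_num
  have hn' : (1 : ℝ) ≤ n := by exact_mod_cast hn
  rw [goldenConj_sq] at hψ
  rw [mul_sub, sqrt_five_mul_fib]
  nlinarith [goldenConj_neg]

end Real

theorem stmt15 (n : ℕ) (hn : 10 < n) :
    let Φ : ℝ := (1 + Real.sqrt 5) / 2
    Real.sqrt 5 * (Real.logb Φ (Real.sqrt 5 * ((Nat.fib (n + 2) : ℝ) - n)) + (Nat.fib (n + 2) : ℝ) - n)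
        - 5 + 3 / ((Nat.fib (n + 2) : ℝ) - n) < Φ ^ (n + 2) := by
  intro Φ
  rw [show Φ = φ from rfl]
  have hm : (222 : ℝ) ≤ (Nat.fib (n + 2) : ℝ) - n := by
    have := Nat.fib_add_two_add_le (show 11 ≤ n by omega)
    rw [show Nat.fib (11 + 2) = 233 by rfl] at this
    have : (233 : ℝ) + n ≤ Nat.fib (n + 2) + 11 := by exact_mod_cast this
    linarith
  have hlog : logb φ (√5 * ((Nat.fib (n + 2) : ℝ) - n)) < n + 2 := by
    rw [logb_lt_iff_lt_rpow one_lt_goldenRatio (by positivity)]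
    exact_mod_cast sqrt_five_mul_fib_sub_lt_goldenRatio_pow (by omega)
  have hψ := neg_le_of_abs_le (abs_goldenConj_pow_le_goldenConj_sq (k := n + 2) le_add_self)
  have hdiv : 3 / ((Nat.fib (n + 2) : ℝ) - n) ≤ 3 / 222 :=
    div_le_div_of_nonneg_left zero_le_three (by norm_num) hm
  have hsqrt : √5 < 2.24 := by rw [sqrt_lt' (by norm_num)]; norm_num
  have hlog' := mul_lt_mul_of_pos_left hlog (sqrt_pos.2 (by norm_num : (0 : ℝ) < 5))
  calc _ < √5 * ((n + 2) + Nat.fib (n + 2) - n) - 5 + 3 / 222 := by linarith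
    _ = 2 * √5 + (φ ^ (n + 2) - ψ ^ (n + 2)) - 5 + 3 / 222 := by
      rw [← sqrt_five_mul_fib]; ring
    _ < φ ^ (n + 2) := by
      rw [goldenConj_sq, goldenConj] at hψ
      linarith
end
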